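/- Let H be a finite-dimensional Hilbert space and a, b self-adjoint operators on H such that λ_i(a) ≤ λ_i(b) for all i, where λ_1 ≥ λ_2 ≥ … denote eigenvalues in decreasing order counted with multiplicity. Then there exists a unitary u on H such that u a u* ≤ b and u a u* commutes with b. -/

import Mathlib

/-!
Map an eigenbasis of `a` onto an eigenbasis of `b` by the unitary `u` with `u (e i) = f i`.
Then `u a u*` and `b` are diagonal in the same orthonormal basis `f`, with eigenvalues `μ i` and
`ν i`: they commute, and `b - u a u*` has the nonnegative eigenvalues `ν i - μ i`.
-/

open ContinuousLinearMap InnerProductSpace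
open scoped ComplexOrder

theorem Module.Basis.commute_of_apply_eq_smul {ι R M : Type*} [CommSemiring R]
    [TopologicalSpace M] [AddCommMonoid M] [Module R M] (b : Module.Basis ι R M)
    {S T : M →L[R] M} {s t : ι → R} (hS : ∀ i, S (b i) = s i • b i)
    (hT : ∀ i, T (b i) = t i • b i) : Commute S T :=
  coe_injective <| b.ext fun i => by simp [mul_def, hS, hT, smul_smul, mul_comm]

namespace OrthonormalBasis

open RCLike

variable {ι 𝕜 E : Type*} [Fintype ι] [RCLike 𝕜] [NormedAddCommGroup E] [InnerProductSpace 𝕜 E]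

theorem eq_sum_smul_rankOne_of_apply_eq_smul (f : OrthonormalBasis ι 𝕜 E) {T : E →L[𝕜] E}
    {r : ι → 𝕜} (hT : ∀ i, T (f i) = r i • f i) :
    T = ∑ i, r i • rankOne 𝕜 (f i) (f i) := by
  ext x
  conv_lhs => rw [← f.sum_repr' x]
  simp [hT, smul_smul, mul_comm]

theorem isPositive_of_apply_eq_smul (f : OrthonormalBasis ι 𝕜 E) {T : E →L[𝕜] E}
    {r : ι → 𝕜} (hT : ∀ i, T (f i) = r i • f i) (hr : ∀ i, 0 ≤ r i) : T.IsPositive := by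
  rw [f.eq_sum_smul_rankOne_of_apply_eq_smul hT]
  exact isPositive_sum _ fun i _ => (isPositive_rankOne_self (f i)).smul_of_nonneg (hr i)

end OrthonormalBasis

theorem LinearIsometryEquiv.conj_apply_eq_smul {𝕜 E F : Type*} [RCLike 𝕜]
    [NormedAddCommGroup E] [InnerProductSpace 𝕜 E] [CompleteSpace E]
    [NormedAddCommGroup F] [InnerProductSpace 𝕜 F] [CompleteSpace F]
    (U : E ≃ₗᵢ[𝕜] F) {A : E →L[𝕜] E} {v : E} {c : 𝕜} (hA : A v = c • v) :
    ((U : E →L[𝕜] F) ∘L A ∘L adjoint (U : E →L[𝕜] F)) (U v) = c • U v := by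
  simp [U.adjoint_eq_symm, hA]

theorem exists_unitary_conj_le_of_eigenvalues_le {H : Type*} [NormedAddCommGroup H]
    [InnerProductSpace ℂ H] [FiniteDimensional ℂ H] {n : ℕ}
    (a b : H →L[ℂ] H)
    (e f : OrthonormalBasis (Fin n) ℂ H) (μ ν : Fin n → ℝ)
    (hae : ∀ i, a (e i) = (μ i : ℂ) • e i) (hbf : ∀ i, b (f i) = (ν i : ℂ) • f i)
    (hle : ∀ i, μ i ≤ ν i) :
    ∃ u : H →L[ℂ] H, u ∈ unitary (H →L[ℂ] H) ∧
      u ∘L a ∘L ContinuousLinearMap.adjoint u ≤ b ∧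
      Commute (u ∘L a ∘L ContinuousLinearMap.adjoint u) b := by
  set U := e.equiv f (Equiv.refl _)
  have hc : ∀ i, ((U : H →L[ℂ] H) ∘L a ∘L adjoint (U : H →L[ℂ] H)) (f i) = (μ i : ℂ) • f i :=
    fun i => by simpa [U] using U.conj_apply_eq_smul (hae i)
  refine ⟨U, (Unitary.linearIsometryEquiv.symm U).2, ?_, f.toBasis.commute_of_apply_eq_smul
    (s := fun i => (μ i : ℂ)) hc hbf⟩
  rw [le_def]
  refine f.isPositive_of_apply_eq_smul (r := fun i => (ν i - μ i : ℂ)) (fun i => ?_) fun i => ?_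
  · rw [sub_apply, hbf, hc, sub_smul]
  · exact_mod_cast sub_nonneg.mpr (hle i)
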